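/- arXiv:1112.2322 — 3 statements merged into one kernel-verified Lean document; each statement's English description precedes it below -/
import Mathlib

section
/- Let N and n be noncommuting variables satisfying Nn = nN + N (i.e., the shift relation). Then for all r ≥ 0, (N + n)^r = Σ_{d=0}^{r} P_{r,d}(n) · N^d, where P_{r,d}(n) = Σ over all compositions (p_0, ..., p_d) of r - d into d+1 nonnegative integers of the product Π_{j=0}^{d} (n + j)^{p_j}. -/
/-!
`P_{r,d}(n)` is the complete homogeneous symmetric polynomial `h_{r-d}` evaluated at
`n, n + 1, …, n + d`. The relation `N * n = (n + 1) * N` lets `N` pass any such coefficient at the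
cost of shifting `n ↦ n + 1`, so expanding `(N + n)^(r+1) = (N + n) * (N + n)^r` and collecting
powers of `N` reduces the induction step to the recurrence
`h_{m+1}(x, …, x + k) = x * h_m(x, …, x + k) + h_{m+1}(x + 1, …, x + k)`.
-/

open Finset

theorem Finset.Nat.sum_antidiagonalTuple_succ {M : Type*} [AddCommMonoid M] (k n : ℕ)
    (f : (Fin (k + 1) → ℕ) → M) :
    ∑ p ∈ Nat.antidiagonalTuple (k + 1) n, f p =
      ∑ ij ∈ antidiagonal n, ∑ p ∈ Nat.antidiagonalTuple k ij.2, f (Fin.cons ij.1 p) := by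
  simp only [Finset.sum, Nat.antidiagonalTuple, Multiset.Nat.antidiagonalTuple,
    List.Nat.antidiagonalTuple, Multiset.map_coe, Multiset.sum_coe, List.flatMap]
  simp only [List.map_flatten, List.map_map, Function.comp_def, List.sum_flatten, sum_map_val]
  rfl

/-- `h_m(x, x + 1, …, x + (k - 1))`; the paper's `P_{r,d}(n)` is
`shiftedCompleteHom n (d + 1) (r - d)`. -/
def shiftedCompleteHom {R : Type*} [Semiring R] (x : R) (k m : ℕ) : R :=
  ∑ p ∈ Nat.antidiagonalTuple k m, (List.ofFn fun j : Fin k => (x + (j : ℕ)) ^ p j).prod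

section CompleteHom

variable {R : Type*} [Semiring R]

theorem shiftedCompleteHom_zero_left (x : R) (m : ℕ) :
    shiftedCompleteHom x 0 m = if m = 0 then 1 else 0 := by
  cases m <;> simp [shiftedCompleteHom]

@[simp]
theorem shiftedCompleteHom_zero_right (x : R) (k : ℕ) : shiftedCompleteHom x k 0 = 1 := by
  simp [shiftedCompleteHom, Nat.antidiagonalTuple_zero_right]

theorem shiftedCompleteHom_succ_left (x : R) (k m : ℕ) :
    shiftedCompleteHom x (k + 1) m =
      ∑ ij ∈ antidiagonal m, x ^ ij.1 * shiftedCompleteHom (x + 1) k ij.2 := by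
  have shift (j : Fin k) : x + ((j.succ : ℕ) : R) = x + 1 + (j : ℕ) := by
    rw [Fin.val_succ, Nat.cast_succ, add_comm _ (1 : R), add_assoc]
  simp only [shiftedCompleteHom, Nat.sum_antidiagonalTuple_succ, mul_sum, List.ofFn_succ,
    List.prod_cons, Fin.cons_zero, Fin.cons_succ, Fin.val_zero, Nat.cast_zero, add_zero, shift]

theorem shiftedCompleteHom_succ_succ (x : R) (k m : ℕ) :
    shiftedCompleteHom x (k + 1) (m + 1) =
      x * shiftedCompleteHom x (k + 1) m + shiftedCompleteHom (x + 1) k (m + 1) := by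
  rw [shiftedCompleteHom_succ_left, shiftedCompleteHom_succ_left, Nat.sum_antidiagonal_succ,
    mul_sum, add_comm]
  simp only [pow_succ', mul_assoc, pow_zero, one_mul]

theorem SemiconjBy.shiftedCompleteHom {N x : R} (hx : SemiconjBy N x (x + 1)) (k m : ℕ) :
    SemiconjBy N (shiftedCompleteHom x k m) (shiftedCompleteHom (x + 1) k m) := by
  induction k generalizing x m with
  | zero =>
    rw [shiftedCompleteHom_zero_left, shiftedCompleteHom_zero_left]
    split_ifs
    exacts [.one_right N, .zero_right N]
  | succ k ih =>
    have hx1 : SemiconjBy N (x + 1) (x + 1 + 1) := hx.add_right (.one_right N)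
    rw [shiftedCompleteHom_succ_left, shiftedCompleteHom_succ_left, SemiconjBy, mul_sum, sum_mul]
    exact sum_congr rfl fun ij _ => (hx.pow_right ij.1).mul_right (ih hx1 ij.2)

end CompleteHom

theorem add_pow_eq_sum_antidiagonal {R : Type*} [Semiring R] {N n : R}
    (hNn : SemiconjBy N n (n + 1)) (r : ℕ) :
    (N + n) ^ r = ∑ ij ∈ antidiagonal r, shiftedCompleteHom n (ij.1 + 1) ij.2 * N ^ ij.1 := by
  induction r with
  | zero => simp
  | succ r ih =>
    set g : ℕ × ℕ → R := fun ij => shiftedCompleteHom (n + 1) ij.1 ij.2 * N ^ ij.1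
    have hmul (ij : ℕ × ℕ) : (N + n) * (shiftedCompleteHom n (ij.1 + 1) ij.2 * N ^ ij.1) =
        n * shiftedCompleteHom n (ij.1 + 1) ij.2 * N ^ ij.1 + g (ij.1 + 1, ij.2) := by
      rw [add_mul, ← mul_assoc, (hNn.shiftedCompleteHom _ _).eq, mul_assoc,
        ← pow_succ', ← mul_assoc, add_comm]
    have hsplit (ij : ℕ × ℕ) : shiftedCompleteHom n (ij.1 + 1) (ij.2 + 1) * N ^ ij.1 =
        n * shiftedCompleteHom n (ij.1 + 1) ij.2 * N ^ ij.1 + g (ij.1, ij.2 + 1) := by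
      rw [shiftedCompleteHom_succ_succ, add_mul]
    -- both sides are `∑ ij ∈ antidiagonal (r + 1), g ij`, peeled off at either end
    have hg : ∑ ij ∈ antidiagonal r, g (ij.1 + 1, ij.2) =
        N ^ (r + 1) + ∑ ij ∈ antidiagonal r, g (ij.1, ij.2 + 1) := by
      have h0 : g (0, r + 1) = 0 := by simp [g, shiftedCompleteHom_zero_left]
      have hlast : g (r + 1, 0) = N ^ (r + 1) := by simp [g]
      rw [← hlast, ← Nat.sum_antidiagonal_succ', Nat.sum_antidiagonal_succ, h0, zero_add]
    calc (N + n) ^ (r + 1)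
        = ∑ ij ∈ antidiagonal r, n * shiftedCompleteHom n (ij.1 + 1) ij.2 * N ^ ij.1 +
            ∑ ij ∈ antidiagonal r, g (ij.1 + 1, ij.2) := by
          rw [pow_succ', ih, mul_sum, ← sum_add_distrib]
          exact sum_congr rfl fun ij _ => hmul ij
      _ = N ^ (r + 1) + ∑ ij ∈ antidiagonal r,
            (n * shiftedCompleteHom n (ij.1 + 1) ij.2 * N ^ ij.1 + g (ij.1, ij.2 + 1)) := by
          rw [hg, sum_add_distrib, add_left_comm]
      _ = ∑ ij ∈ antidiagonal (r + 1), shiftedCompleteHom n (ij.1 + 1) ij.2 * N ^ ij.1 := by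
          simp only [Nat.sum_antidiagonal_succ', shiftedCompleteHom_zero_right, one_mul, hsplit]

/-- The binomial theorem for `(N + n)^r` in the shift algebra `N*n = n*N + N`:
`(N+n)^r = Σ_{d=0}^r P_{r,d}(n) N^d` where `P_{r,d}(n)` is the sum over all
compositions `(p_0,…,p_d)` of `r-d` into `d+1` nonnegative parts of
`Π_{j=0}^d (n+j)^{p_j}`. -/
theorem shift_binomial_theorem {R : Type*} [Ring R] (N n : R)
    (h : N * n = n * N + N) (r : ℕ) :
    (N + n) ^ r =
      ∑ d ∈ Finset.range (r + 1),
        (∑ p ∈ Finset.Nat.antidiagonalTuple (d + 1) (r - d),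
            (List.ofFn fun j : Fin (d + 1) => (n + (j : ℕ)) ^ (p j)).prod) * N ^ d := by
  have hNn : SemiconjBy N n (n + 1) := by rw [SemiconjBy, add_one_mul, h]
  rw [add_pow_eq_sum_antidiagonal hNn, Nat.sum_antidiagonal_eq_sum_range_succ_mk]
  rfl
end

section
/- In the Weyl algebra with generators x and D satisfying Dx = xD + 1, for every r ≥ 0: (x + D)^r = Σ_{k=0}^{⌊r/2⌋} (r! / (2^k · k!)) · Σ_{j+l = r-2k} (1/(j! · l!)) · x^j · D^l. -/
/-!
Let `N m = ∑_{j+l=m} C(m,j) x^j D^l` be the binomial expansion of `(x + D)^m` in normal order, as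
if `x` and `D` commuted. Commuting `x` to the left through `N m` differentiates it in `D`, so
`N m * (x + D) = N (m+1) + m N (m-1)`, the rule `X He_m = He_(m+1) + m He_(m-1)` for the
(probabilists') Hermite polynomials. Induction on `r` then gives
`(x + D)^r = ∑_k C(r,2k) (2k-1)‼ N (r-2k)`, where `C(r,2k) (2k-1)‼` counts the ways of contracting
`k` disjoint pairs among the `r` factors, and `(2k)! = 2^k k! (2k-1)‼` turns this coefficient into
`r! / (2^k k! (r-2k)!)`.
-/

open Finset
open scoped Nat

def matchingCount (r k : ℕ) : ℕ := r.choose (2 * k) * (2 * k - 1)‼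

@[simp]
lemma matchingCount_zero_right (r : ℕ) : matchingCount r 0 = 1 := by
  simp [matchingCount]

lemma matchingCount_eq_zero_of_lt {r k : ℕ} (h : r < 2 * k) : matchingCount r k = 0 := by
  simp [matchingCount, Nat.choose_eq_zero_of_lt h]

lemma matchingCount_succ_succ (r k : ℕ) :
    matchingCount (r + 1) (k + 1) = matchingCount r (k + 1) + (r - 2 * k) * matchingCount r k := by
  have odd_step : r.choose (2 * k + 1) * (2 * k + 1)‼ = (r - 2 * k) * matchingCount r k := by
    rw [Nat.doubleFactorial_add_one, ← mul_assoc, Nat.choose_succ_right_eq, matchingCount]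
    ring
  rw [matchingCount, matchingCount, show 2 * (k + 1) = 2 * k + 1 + 1 by ring, Nat.choose_succ_succ,
    add_mul, ← odd_step, add_comm]
  rfl

lemma matchingCount_mul_factorial {r k : ℕ} (h : 2 * k ≤ r) :
    matchingCount r k * (r - 2 * k)! * (2 ^ k * k !) = r ! := by
  have factorial_split : (2 * k - 1)‼ * (2 ^ k * k !) = (2 * k)! := by
    cases k with
    | zero => rfl
    | succ k =>
      rw [← Nat.doubleFactorial_two_mul, show 2 * (k + 1) = 2 * k + 1 + 1 by ring,
        Nat.factorial_eq_mul_doubleFactorial, Nat.add_sub_cancel, mul_comm]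
  rw [← Nat.choose_mul_factorial_mul_factorial h, matchingCount, ← factorial_split]
  ring

namespace Weyl

variable {A : Type*} [Semiring A]

def normalOrderedPow (x D : A) (m : ℕ) : A :=
  ∑ p ∈ antidiagonal m, m.choose p.1 • (x ^ p.1 * D ^ p.2)

@[simp]
lemma normalOrderedPow_zero (x D : A) : normalOrderedPow x D 0 = 1 := by
  simp [normalOrderedPow]

lemma normalOrderedPow_eq_factorial_smul [Algebra ℚ A] (x D : A) (m : ℕ) :
    normalOrderedPow x D m =
      (m ! : ℚ) • ∑ p ∈ antidiagonal m, ((1 : ℚ) / (p.1 ! * p.2 !)) • (x ^ p.1 * D ^ p.2) := by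
  rw [normalOrderedPow, smul_sum]
  refine sum_congr rfl fun ⟨i, j⟩ hp ↦ ?_
  obtain rfl : i + j = m := HasAntidiagonal.mem_antidiagonal.mp hp
  rw [smul_smul, ← Nat.cast_smul_eq_nsmul ℚ, Nat.cast_add_choose, mul_one_div]

lemma mul_normalOrderedPow_add_normalOrderedPow_mul (x D : A) (m : ℕ) :
    x * normalOrderedPow x D m + normalOrderedPow x D m * D = normalOrderedPow x D (m + 1) := by
  rw [normalOrderedPow, normalOrderedPow,
    sum_antidiagonal_choose_succ_nsmul (fun i j ↦ x ^ i * D ^ j), mul_sum, sum_mul, add_comm]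
  congr 1 <;> refine sum_congr rfl fun p hp ↦ ?_
  · rw [smul_mul_assoc, mul_assoc, ← pow_succ]
  · rw [Nat.choose_symm_of_eq_add (HasAntidiagonal.mem_antidiagonal.mp hp).symm, mul_smul_comm,
      ← mul_assoc, ← pow_succ']

variable {x D : A}

lemma pow_succ_mul_of_mul_eq (h : D * x = x * D + 1) (l : ℕ) :
    D ^ (l + 1) * x = x * D ^ (l + 1) + (l + 1) • D ^ l := by
  induction l with
  | zero => simpa using h
  | succ l ih =>
    rw [pow_succ, mul_assoc, h, mul_add, mul_one, ← mul_assoc, ih, add_mul, smul_mul_assoc,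
      ← pow_succ, mul_assoc, ← pow_succ, add_assoc, ← succ_nsmul]

lemma normalOrderedPow_mul_of_mul_eq (h : D * x = x * D + 1) (m : ℕ) :
    normalOrderedPow x D m * x = x * normalOrderedPow x D m + m • normalOrderedPow x D (m - 1) := by
  cases m with
  | zero => simp
  | succ m =>
    have monomial_mul (i j : ℕ) :
        x ^ i * D ^ (j + 1) * x = x * (x ^ i * D ^ (j + 1)) + (j + 1) • (x ^ i * D ^ j) := by
      rw [mul_assoc, pow_succ_mul_of_mul_eq h, mul_add, ← mul_assoc, ← pow_succ, pow_succ',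
        mul_assoc, mul_smul_comm]
    have coeff {i j : ℕ} (hij : (i, j) ∈ antidiagonal m) :
        (m + 1).choose i * (j + 1) = (m + 1) * m.choose i := by
      obtain rfl : i + j = m := HasAntidiagonal.mem_antidiagonal.mp hij
      rw [mul_comm (i + j + 1), Nat.choose_mul_succ_eq, show i + j + 1 - i = j + 1 by omega]
    simp only [normalOrderedPow, Nat.sum_antidiagonal_succ' (n := m), add_mul, mul_add, sum_mul,
      mul_sum, smul_mul_assoc, mul_smul_comm, smul_sum, add_tsub_cancel_right, monomial_mul,
      smul_add, sum_add_distrib, pow_zero, mul_one, ← pow_succ, ← pow_succ', add_assoc]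
    congr 2
    refine sum_congr rfl fun p hp ↦ ?_
    rw [smul_smul, smul_smul, coeff hp]

lemma normalOrderedPow_mul_add_of_mul_eq (h : D * x = x * D + 1) (m : ℕ) :
    normalOrderedPow x D m * (x + D) =
      normalOrderedPow x D (m + 1) + m • normalOrderedPow x D (m - 1) := by
  rw [mul_add, normalOrderedPow_mul_of_mul_eq h, add_right_comm,
    mul_normalOrderedPow_add_normalOrderedPow_mul]

lemma matchingCount_smul_normalOrderedPow_mul_add (h : D * x = x * D + 1) (r k : ℕ) :
    (matchingCount r k • normalOrderedPow x D (r - 2 * k)) * (x + D) =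
      matchingCount r k • normalOrderedPow x D (r + 1 - 2 * k) +
        ((r - 2 * k) * matchingCount r k) • normalOrderedPow x D (r + 1 - 2 * (k + 1)) := by
  rcases lt_or_ge r (2 * k) with hr | hr
  · simp [matchingCount_eq_zero_of_lt hr]
  · rw [smul_mul_assoc, normalOrderedPow_mul_add_of_mul_eq h, smul_add, smul_smul,
      mul_comm (matchingCount r k), show r - 2 * k + 1 = r + 1 - 2 * k by omega,
      show r - 2 * k - 1 = r + 1 - 2 * (k + 1) by omega]

theorem add_pow_eq_sum_matchingCount_smul (h : D * x = x * D + 1) (r : ℕ) :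
    (x + D) ^ r = ∑ k ∈ range (r + 1), matchingCount r k • normalOrderedPow x D (r - 2 * k) := by
  induction r with
  | zero => simp
  | succ r ih =>
    set g : ℕ → A := fun k ↦ normalOrderedPow x D (r + 1 - 2 * k)
    have shift : ∑ k ∈ range (r + 1), matchingCount r k • g k =
        ∑ k ∈ range (r + 1), matchingCount r (k + 1) • g (k + 1) + g 0 := by
      rw [sum_range_succ (fun k ↦ matchingCount r (k + 1) • g (k + 1)),
        matchingCount_eq_zero_of_lt (by omega), zero_smul, add_zero, sum_range_succ',
        matchingCount_zero_right, one_smul]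
    rw [pow_succ, ih, sum_mul]
    simp only [matchingCount_smul_normalOrderedPow_mul_add h]
    rw [sum_add_distrib, shift, sum_range_succ' _ (r + 1)]
    simp only [matchingCount_succ_succ, add_smul, sum_add_distrib, matchingCount_zero_right,
      one_smul]
    abel


end Weyl

/-- Binomial theorem for `(x + D)^r` in the Weyl algebra `D*x = x*D + 1`. -/
theorem weyl_binomial {A : Type*} [Ring A] [Algebra ℚ A] (x D : A)
    (h : D * x = x * D + 1) (r : ℕ) :
    (x + D) ^ r =
      ∑ k ∈ Finset.range (r / 2 + 1),
        ((r.factorial : ℚ) / (2 ^ k * k.factorial)) •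
          ∑ jl ∈ Finset.HasAntidiagonal.antidiagonal (r - 2 * k),
            ((1 : ℚ) / (jl.1.factorial * jl.2.factorial)) • (x ^ jl.1 * D ^ jl.2) := by
  have coeff {k : ℕ} (hk : 2 * k ≤ r) :
      (matchingCount r k * (r - 2 * k)! : ℚ) = r ! / (2 ^ k * k !) := by
    rw [eq_div_iff (by positivity)]
    exact_mod_cast matchingCount_mul_factorial hk
  calc (x + D) ^ r
      = ∑ k ∈ range (r + 1), matchingCount r k • Weyl.normalOrderedPow x D (r - 2 * k) :=
        Weyl.add_pow_eq_sum_matchingCount_smul h r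
    _ = ∑ k ∈ range (r / 2 + 1), matchingCount r k • Weyl.normalOrderedPow x D (r - 2 * k) := by
        refine (sum_subset (range_subset_range.2 (by omega)) fun k _ hk ↦ ?_).symm
        rw [matchingCount_eq_zero_of_lt (by simp only [mem_range] at hk; omega), zero_smul]
    _ = _ := by
        refine sum_congr rfl fun k hk ↦ ?_
        rw [Weyl.normalOrderedPow_eq_factorial_smul, ← Nat.cast_smul_eq_nsmul ℚ, smul_smul,
          coeff (by simp only [mem_range] at hk; omega)]
end

section
/- In the algebra generated by N and n with relation Nn = nN + N, for all r ≥ 2: the terms of (N+n)^r of total degree ≥ r−1 agree with those of the symmetrized expansion ((N+n))^r + C(r,2)·N·((N+n))^{r-2}, where ((N+n))^s denotes Σ_{i=0}^{s} C(s,i) n^i N^{s-i}. Equivalently, (N+n)^r − Σ_i C(r,i) n^i N^{r-i} − C(r,2)·Σ_i C(r-2,i) n^i N^{r-1-i} is a sum of normally ordered monomials n^i N^j with i + j ≤ r − 2. -/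
/-!
Let `F_d` be the span of the normally ordered monomials `n^i N^j` with `i + j ≤ d`. Since
`N^j n = n N^j + j N^j`, right multiplication by `N + n` maps `F_d` into `F_{d+1}`. For the
normally ordered binomial sums `S_s = ∑ C(s,i) n^i N^(s-i)` the relation gives exactly
`S_{s+1} (N + n) = S_{s+2} + (s+1) S_s N`, while `S_s N (N + n) ≡ S_{s+1} N` modulo `F_{s+1}`.
Multiplying `(N + n)^r ≡ S_r + C(r,2) S_{r-2} N (mod F_{r-2})` by `N + n` therefore yields the
same congruence for `r + 1`, because `C(r,2) + r = C(r+1,2)`.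
-/

open Finset

theorem sum_antidiagonal_choose_mul_snd_nsmul {M : Type*} [AddCommMonoid M] (f : ℕ → ℕ → M)
    (s : ℕ) :
    ∑ p ∈ antidiagonal (s + 1), ((s + 1).choose p.1 * p.2) • f p.1 p.2
      = (s + 1) • ∑ p ∈ antidiagonal s, s.choose p.1 • f p.1 (p.2 + 1) := by
  rw [Nat.sum_antidiagonal_succ', smul_sum]
  simp only [mul_zero, zero_smul, zero_add, smul_smul]
  refine sum_congr rfl fun p hp => ?_
  have hp : p.1 + p.2 = s := mem_antidiagonal.1 hp
  rw [mul_comm (s + 1), Nat.choose_mul_succ_eq, show s + 1 - p.1 = p.2 + 1 by omega]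

section Semiring

variable {A : Type*} [Semiring A] {n N : A}

theorem pow_mul_eq_mul_pow_add (h : N * n = n * N + N) (j : ℕ) :
    N ^ j * n = n * N ^ j + j • N ^ j := by
  induction j with
  | zero => simp
  | succ j ih =>
    rw [pow_succ, mul_assoc, h, mul_add, ← mul_assoc, ih, add_mul, mul_assoc, ← pow_succ,
      smul_mul_assoc, ← pow_succ, succ_nsmul]
    abel

theorem monomial_mul_add (h : N * n = n * N + N) (i j : ℕ) :
    n ^ i * N ^ j * (N + n)
      = n ^ i * N ^ (j + 1) + n ^ (i + 1) * N ^ j + j • (n ^ i * N ^ j) := by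
  rw [mul_add, mul_assoc, ← pow_succ, mul_assoc, pow_mul_eq_mul_pow_add h, mul_add, ← mul_assoc,
    ← pow_succ, mul_smul_comm, add_assoc]

variable (n N) in
/-- The paper's pretend-commutative power `((N+n))^s`. -/
def normalPow (s : ℕ) : A :=
  ∑ p ∈ antidiagonal s, s.choose p.1 • (n ^ p.1 * N ^ p.2)

theorem normalPow_mul_add (h : N * n = n * N + N) (s : ℕ) :
    normalPow n N s * (N + n)
      = normalPow n N (s + 1)
        + ∑ p ∈ antidiagonal s, (s.choose p.1 * p.2) • (n ^ p.1 * N ^ p.2) := by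
  rw [normalPow, normalPow, sum_antidiagonal_choose_succ_nsmul (fun i j => n ^ i * N ^ j),
    sum_mul]
  simp only [smul_mul_assoc, monomial_mul_add h, smul_add, sum_add_distrib, mul_smul]
  congr 2
  refine sum_congr rfl fun p hp => ?_
  rw [Nat.choose_symm_of_eq_add (mem_antidiagonal.1 hp).symm]

theorem normalPow_succ_mul_add (h : N * n = n * N + N) (s : ℕ) :
    normalPow n N (s + 1) * (N + n)
      = normalPow n N (s + 2) + (s + 1) • (normalPow n N s * N) := by
  rw [normalPow_mul_add h, sum_antidiagonal_choose_mul_snd_nsmul (fun i j => n ^ i * N ^ j)]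
  congr 2
  simp only [normalPow, sum_mul, smul_mul_assoc, mul_assoc, pow_succ]

end Semiring

section Filtration

variable {R A : Type*} [CommRing R] [Ring A] [Algebra R A] {n N : A}

variable (R n N) in
def normalDegLE (d : ℕ) : Submodule R A :=
  Submodule.span R {x | ∃ i j, i + j ≤ d ∧ n ^ i * N ^ j = x}

theorem monomial_mem_normalDegLE {d i j : ℕ} (hij : i + j ≤ d) :
    n ^ i * N ^ j ∈ normalDegLE R n N d :=
  Submodule.subset_span ⟨i, j, hij, rfl⟩

theorem sum_antidiagonal_smul_mem_normalDegLE (c : ℕ × ℕ → ℕ) (d : ℕ) :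
    ∑ p ∈ antidiagonal d, c p • (n ^ p.1 * N ^ p.2) ∈ normalDegLE R n N d :=
  Submodule.sum_mem _ fun _ hp =>
    Submodule.smul_of_tower_mem _ _ (monomial_mem_normalDegLE (mem_antidiagonal.1 hp).le)

theorem mul_mem_normalDegLE_succ {d : ℕ} {y : A}
    (hy : ∀ i j, i + j ≤ d → n ^ i * N ^ j * y ∈ normalDegLE R n N (d + 1)) {x : A}
    (hx : x ∈ normalDegLE R n N d) : x * y ∈ normalDegLE R n N (d + 1) := by
  induction hx using Submodule.span_induction with
  | mem x hx => obtain ⟨i, j, hij, rfl⟩ := hx; exact hy i j hij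
  | zero => simp
  | add x x' _ _ hx hx' => rw [add_mul]; exact add_mem hx hx'
  | smul a x _ hx => rw [smul_mul_assoc]; exact Submodule.smul_mem _ a hx

theorem mul_add_mem_normalDegLE_succ (h : N * n = n * N + N) {d : ℕ} {x : A}
    (hx : x ∈ normalDegLE R n N d) : x * (N + n) ∈ normalDegLE R n N (d + 1) := by
  refine mul_mem_normalDegLE_succ (fun i j hij => ?_) hx
  rw [monomial_mul_add h]
  refine add_mem (add_mem ?_ ?_) (Submodule.smul_of_tower_mem _ _ ?_) <;>
    exact monomial_mem_normalDegLE (by omega)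

theorem normalPow_mul_mul_add_sub_mem (h : N * n = n * N + N) (s : ℕ) :
    normalPow n N s * N * (N + n) - normalPow n N (s + 1) * N ∈ normalDegLE R n N (s + 1) := by
  have hN : N * (N + n) = (N + n) * N + N := by rw [mul_add, add_mul, h, add_assoc]
  rw [mul_assoc, hN, mul_add, ← mul_assoc, normalPow_mul_add h, add_mul, add_assoc,
    add_sub_cancel_left, ← add_mul]
  refine mul_mem_normalDegLE_succ (fun i j hij => ?_)
    (add_mem (sum_antidiagonal_smul_mem_normalDegLE _ s)
      (sum_antidiagonal_smul_mem_normalDegLE _ s))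
  rw [mul_assoc, ← pow_succ]
  exact monomial_mem_normalDegLE (by omega)

theorem add_pow_sub_normalPow_mem (h : N * n = n * N + N) (s : ℕ) :
    (N + n) ^ (s + 2) - normalPow n N (s + 2) - (s + 2).choose 2 • (normalPow n N s * N)
      ∈ normalDegLE R n N s := by
  induction s with
  | zero =>
    have : (N + n) ^ 2 - normalPow n N 2 - normalPow n N 0 * N = 0 := by
      simp only [normalPow, Nat.sum_antidiagonal_succ, Nat.antidiagonal_zero, sum_singleton,
        Nat.choose_self, Nat.choose_zero_right, Nat.choose_one_right, one_smul, pow_zero,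
        pow_one, one_mul, mul_one, zero_add, one_add_one_eq_two, two_nsmul, sq, add_mul, mul_add, h]
      abel
    rw [zero_add, Nat.choose_self, one_smul, this]
    exact zero_mem _
  | succ s ih =>
    have key : (N + n) ^ (s + 3) - normalPow n N (s + 3)
          - (s + 3).choose 2 • (normalPow n N (s + 1) * N)
        = ((N + n) ^ (s + 2) - normalPow n N (s + 2)
            - (s + 2).choose 2 • (normalPow n N s * N)) * (N + n)
          + (s + 2).choose 2 • (normalPow n N s * N * (N + n) - normalPow n N (s + 1) * N) := by
      rw [Nat.choose_succ_succ', Nat.choose_one_right, pow_succ _ (s + 2), sub_mul, sub_mul,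
        normalPow_succ_mul_add h (s + 1), smul_mul_assoc]
      module
    rw [key]
    exact add_mem (mul_add_mem_normalDegLE_succ h ih)
      (Submodule.smul_of_tower_mem _ _ (normalPow_mul_mul_add_sub_mem h s))

theorem exists_eq_sum_of_mem_normalDegLE {d : ℕ} {x : A} (hx : x ∈ normalDegLE R n N d) :
    ∃ c : ℕ → ℕ → R,
      x = ∑ i ∈ range (d + 1), ∑ j ∈ range (d + 1 - i), c i j • (n ^ i * N ^ j) := by
  induction hx using Submodule.span_induction with
  | mem x hx =>
    obtain ⟨i, j, hij, rfl⟩ := hx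
    refine ⟨fun a b => if a = i ∧ b = j then 1 else 0, ?_⟩
    have hi : i < d + 1 := by omega
    have hj : j < d + 1 - i := by omega
    simp [ite_and, ite_smul, hi, hj]
  | zero => exact ⟨0, by simp⟩
  | add x y _ _ hx hy =>
    obtain ⟨c, rfl⟩ := hx
    obtain ⟨c', rfl⟩ := hy
    exact ⟨c + c', by simp only [Pi.add_apply, add_smul, sum_add_distrib]⟩
  | smul a x _ hx =>
    obtain ⟨c, rfl⟩ := hx
    exact ⟨a • c, by simp only [smul_sum, Pi.smul_apply, smul_smul, smul_eq_mul]⟩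

variable (R) in
theorem normalPow_eq_sum_range (s : ℕ) :
    normalPow n N s = ∑ i ∈ range (s + 1), (s.choose i : R) • (n ^ i * N ^ (s - i)) := by
  simp only [normalPow, Nat.sum_antidiagonal_eq_sum_range_succ_mk, Nat.cast_smul_eq_nsmul]

variable (R) in
theorem normalPow_mul_eq_sum_range (s : ℕ) :
    normalPow n N s * N
      = ∑ i ∈ range (s + 1), (s.choose i : R) • (n ^ i * N ^ (s + 1 - i)) := by
  rw [normalPow_eq_sum_range R, sum_mul]
  refine sum_congr rfl fun i hi => ?_
  rw [smul_mul_assoc, mul_assoc, ← pow_succ, Nat.sub_add_comm (mem_range_succ_iff.1 hi)]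

end Filtration

/-- In a ℚ-algebra with `N*n = n*N + N`, for `r ≥ 2`, the difference between
`(N+n)^r` and the first two terms of the symmetrized expansion,
`Σ_i C(r,i) n^i N^{r-i} + C(r,2)·Σ_i C(r-2,i) n^i N^{r-1-i}`, is a
ℚ-linear combination of normally ordered monomials `n^i N^j` with `i+j ≤ r-2`. -/
theorem shift_expansion_leading_terms {A : Type*} [Ring A] [Algebra ℚ A]
    (N n : A) (h : N * n = n * N + N) (r : ℕ) (hr : 2 ≤ r) :
    ∃ c : ℕ → ℕ → ℚ,
      (N + n) ^ r
        - (∑ i ∈ Finset.range (r + 1), (r.choose i : ℚ) • (n ^ i * N ^ (r - i)))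
        - (r.choose 2 : ℚ) •
            (∑ i ∈ Finset.range (r - 1), ((r - 2).choose i : ℚ) • (n ^ i * N ^ (r - 1 - i)))
      = ∑ i ∈ Finset.range (r - 1), ∑ j ∈ Finset.range (r - 1 - i),
          c i j • (n ^ i * N ^ j) := by
  obtain ⟨s, rfl⟩ : ∃ s, r = s + 2 := ⟨r - 2, by omega⟩
  rw [show s + 2 - 1 = s + 1 by omega, Nat.add_sub_cancel, ← normalPow_eq_sum_range,
    ← normalPow_mul_eq_sum_range, Nat.cast_smul_eq_nsmul]
  exact exists_eq_sum_of_mem_normalDegLE (add_pow_sub_normalPow_mem h s)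
end
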